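/- Let P be a finite set of points in general position in ℝ², let s, s′ ∈ P, and let a, b, c ∈ P be such that the quadrilaterals s,a,b,c and s′,a,b,c are both convex and empty of points of P, and s,a,b,c,s′ are the vertices of a convex pentagon in that order. Then there exists a point s″ ∈ P (contained in the closed triangle s,c,s′) such that s,a,b,c,s″ is a 5-hole of P. -/

import Mathlib

/-!
Fix the orientation `σ` of the pentagon `s a b c s'`. Among the points of `P` in the triangle
`s c s'` lying strictly on the side of `s'` of the line `s c`, take `s''` closest to that line.
Every orientation condition of `s a b c s'` involving `s'` is a half-plane condition, so it
transfers to `s''` by convexity, and general position makes it strict. A point of `P` inside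
the new pentagon lies inside the empty quadrilateral `s a b c`, or on the line `s c` (excluded
by general position), or inside the triangle `s c s''` and then strictly closer to the line
`s c` than `s''`, contradicting the choice of `s''`.
-/

open scoped Classical

noncomputable section

abbrev Pt : Type := EuclideanSpace ℝ (Fin 2)

/-- No three distinct points of `P` are collinear. -/
def GenPos (P : Set Pt) : Prop :=
  ∀ a ∈ P, ∀ b ∈ P, ∀ c ∈ P, a ≠ b → a ≠ c → b ≠ c → ¬ Collinear ℝ ({a, b, c} : Set Pt)

/-- A set of points is in convex position if every point is an extreme point:
no point lies in the convex hull of the others. -/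
def ConvexPos (S : Set Pt) : Prop := ∀ p ∈ S, p ∉ convexHull ℝ (S \ {p})

/-- The 5-holes of `P`: 5-element subsets of `P` in convex position whose
convex hull has no point of `P` in its interior. -/
def Holes5 (P : Set Pt) : Set (Finset Pt) :=
  {H | H.card = 5 ∧ ↑H ⊆ P ∧ ConvexPos ↑H ∧
    ∀ x ∈ P, x ∉ interior (convexHull ℝ (H : Set Pt))}

/-- Orientation determinant of the triple `(o, a, b)`. -/
def det2 (o a b : Pt) : ℝ :=
  (a 0 - o 0) * (b 1 - o 1) - (a 1 - o 1) * (b 0 - o 0)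

/-- `v` lists the vertices of a strictly convex polygon in cyclic order:
for every edge `v i v (i+1)`, all other vertices lie strictly on the same side. -/
def ConvexCyclicOrder {n : ℕ} [NeZero n] (v : Fin n → Pt) : Prop :=
  ∃ σ : ℝ, (σ = 1 ∨ σ = -1) ∧
    ∀ i j : Fin n, j ≠ i → j ≠ i + 1 → 0 < σ * det2 (v i) (v (i + 1)) (v j)

/-- `x` lies in the closed angular region at `p` spanned by the rays from `p`
through `a` and through `c` (the convex cone generated by the two rays). -/
def InAngle (a p c x : Pt) : Prop :=
  ∃ s t : ℝ, 0 ≤ s ∧ 0 ≤ t ∧ x = p + s • (a - p) + t • (c - p)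

/-- The extreme points (convex-hull vertices) of a planar point set. -/
def extremePts (P : Set Pt) : Set Pt := {p ∈ P | p ∉ convexHull ℝ (P \ {p})}

/-- What remains of `P` after peeling off the first `n` convex layers. -/
def layerRest (P : Set Pt) : ℕ → Set Pt
  | 0 => P
  | n + 1 => layerRest P n \ extremePts (layerRest P n)

/-- The `i`-th convex layer of `P` (0-indexed). -/
def layer (P : Set Pt) (i : ℕ) : Set Pt := extremePts (layerRest P i)

/-- The number of convex layers of `P`. -/
def numLayers (P : Set Pt) : ℕ := {i | (layer P i).Nonempty}.ncard

lemma det2_self_left (o b : Pt) : det2 o o b = 0 := by unfold det2; ring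

lemma det2_self_right (o a : Pt) : det2 o a o = 0 := by unfold det2; ring

lemma det2_self_mid (o a : Pt) : det2 o a a = 0 := by unfold det2; ring

lemma det2_rotate (o a b : Pt) : det2 o a b = det2 a b o := by unfold det2; ring

lemma det2_swap (o a b : Pt) : det2 o b a = -det2 o a b := by unfold det2; ring

lemma det2_add_det2_add_det2 (u v w x : Pt) :
    det2 u v x + det2 v w x + det2 w u x = det2 u v w := by
  unfold det2; ring

lemma det2_smul_add_smul (o a y z : Pt) {p q : ℝ} (hpq : p + q = 1) :
    det2 o a (p • y + q • z) = p * det2 o a y + q * det2 o a z := by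
  simp only [det2, PiLp.add_apply, PiLp.smul_apply, smul_eq_mul]
  linear_combination ((a 0 - o 0) * o 1 - (a 1 - o 1) * o 0) * hpq

lemma det2_add_smul_sub (o a y z : Pt) (t : ℝ) :
    det2 o a (y + t • (y - z)) = det2 o a y + t * (det2 o a y - det2 o a z) := by
  simp only [det2, PiLp.add_apply, PiLp.sub_apply, PiLp.smul_apply, smul_eq_mul]
  ring

lemma det2_smul_eq (u v w x : Pt) :
    det2 u v w • x = det2 v w x • u + det2 w u x • v + det2 u v x • w := by
  ext i
  fin_cases i <;>
    simp only [det2, Fin.isValue, Fin.zero_eta, Fin.mk_one, PiLp.smul_apply, smul_eq_mul,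
      PiLp.add_apply] <;> ring

lemma continuous_det2 (o a : Pt) : Continuous (det2 o a) := by
  unfold det2; fun_prop

lemma ne_of_mul_det2_pos {σ : ℝ} {o a b : Pt} (h : 0 < σ * det2 o a b) :
    o ≠ a ∧ o ≠ b ∧ a ≠ b := by
  refine ⟨?_, ?_, ?_⟩ <;> rintro rfl <;> simp [det2_self_left, det2_self_right, det2_self_mid] at h

lemma collinear_of_det2_eq_zero {o a b : Pt} (h : det2 o a b = 0) :
    Collinear ℝ ({o, a, b} : Set Pt) := by
  by_cases hao : a = o
  · subst hao
    simpa using collinear_pair ℝ a b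
  have hcoord : a 0 - o 0 ≠ 0 ∨ a 1 - o 1 ≠ 0 := by
    by_contra! hcon
    refine hao (PiLp.ext fun i => ?_)
    fin_cases i
    exacts [sub_eq_zero.mp hcon.1, sub_eq_zero.mp hcon.2]
  rw [collinear_iff_of_mem (by simp : o ∈ ({o, a, b} : Set Pt))]
  refine ⟨a - o, ?_⟩
  rintro p (rfl | rfl | rfl)
  · exact ⟨0, by simp⟩
  · exact ⟨1, by simp⟩
  unfold det2 at h
  rcases hcoord with h0 | h1
  on_goal 1 => refine ⟨(p 0 - o 0) / (a 0 - o 0), PiLp.ext fun i => ?_⟩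
  on_goal 2 => refine ⟨(p 1 - o 1) / (a 1 - o 1), PiLp.ext fun i => ?_⟩
  all_goals
    fin_cases i <;>
      simp only [Fin.zero_eta, Fin.mk_one, Fin.isValue, vadd_eq_add, PiLp.add_apply,
        PiLp.smul_apply, PiLp.sub_apply, smul_eq_mul] <;>
      field_simp <;> linarith

theorem GenPos.det2_ne_zero {P : Set Pt} (hgp : GenPos P) {x y z : Pt} (hx : x ∈ P)
    (hy : y ∈ P) (hz : z ∈ P) (hxy : x ≠ y) (hxz : x ≠ z) (hyz : y ≠ z) : det2 x y z ≠ 0 :=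
  fun h => hgp x hx y hy z hz hxy hxz hyz (collinear_of_det2_eq_zero h)

lemma convex_det2_nonneg (σ : ℝ) (o a : Pt) : Convex ℝ {y : Pt | 0 ≤ σ * det2 o a y} := by
  intro y hy z hz p q hp hq hpq
  simp only [Set.mem_ofPred_eq, det2_smul_add_smul o a y z hpq] at *
  nlinarith [mul_nonneg hp hy, mul_nonneg hq hz]

lemma det2_nonneg_of_mem_convexHull {σ : ℝ} {o a x : Pt} {S : Set Pt}
    (hS : ∀ q ∈ S, 0 ≤ σ * det2 o a q) (hx : x ∈ convexHull ℝ S) : 0 ≤ σ * det2 o a x :=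
  convexHull_min hS (convex_det2_nonneg σ o a) hx

lemma det2_pos_of_mem_interior_convexHull {σ : ℝ} {o a p x : Pt} {S : Set Pt}
    (hS : ∀ q ∈ S, 0 ≤ σ * det2 o a q) (hp : 0 < σ * det2 o a p)
    (hx : x ∈ interior (convexHull ℝ S)) : 0 < σ * det2 o a x := by
  have hx0 : 0 ≤ σ * det2 o a x := det2_nonneg_of_mem_convexHull hS (interior_subset hx)
  refine hx0.lt_of_ne fun hzero => ?_
  have hpath : ContinuousAt (fun t : ℝ => x + t • (x - p)) 0 := by fun_prop
  have hnhds : (fun t : ℝ => x + t • (x - p)) ⁻¹' interior (convexHull ℝ S) ∈ nhds 0 :=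
    hpath.preimage_mem_nhds (by simpa using isOpen_interior.mem_nhds hx)
  obtain ⟨ε, hε, hball⟩ := Metric.mem_nhds_iff.mp hnhds
  have hmem : ε / 2 ∈ Metric.ball (0 : ℝ) ε := by
    rw [Metric.mem_ball, dist_zero_right, Real.norm_eq_abs, abs_of_pos (by positivity)]
    linarith
  have hle := det2_nonneg_of_mem_convexHull hS (interior_subset (hball hmem))
  rw [det2_add_smul_sub, mul_add, ← hzero] at hle
  nlinarith

lemma mem_convexHull_triangle_of_det2 {σ : ℝ} {u v w x : Pt} (hD : 0 < σ * det2 u v w)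
    (hu : 0 ≤ σ * det2 v w x) (hv : 0 ≤ σ * det2 w u x) (hw : 0 ≤ σ * det2 u v x) :
    x ∈ convexHull ℝ ({u, v, w} : Set Pt) := by
  have hD0 : det2 u v w ≠ 0 := right_ne_zero_of_mul hD.ne'
  have hweight : ∀ d : ℝ, 0 ≤ σ * d → 0 ≤ d / det2 u v w := fun d hd => by
    rw [← mul_div_mul_left d _ (left_ne_zero_of_mul hD.ne')]
    exact div_nonneg hd hD.le
  have hx : x = (det2 v w x / det2 u v w) • u + (det2 w u x / det2 u v w) • v +
      (det2 u v x / det2 u v w) • w := by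
    rw [div_eq_inv_mul, div_eq_inv_mul, div_eq_inv_mul, mul_smul, mul_smul, mul_smul,
      ← smul_add, ← smul_add, ← det2_smul_eq, inv_smul_smul₀ hD0]
  have hsum :
      det2 v w x / det2 u v w + det2 w u x / det2 u v w + det2 u v x / det2 u v w = 1 := by
    rw [← add_div, ← add_div, div_eq_one_iff_eq hD0, ← det2_add_det2_add_det2 u v w x]
    ring
  have hmem := (convex_convexHull ℝ ({u, v, w} : Set Pt)).sum_mem (t := Finset.univ)
    (w := ![det2 v w x / det2 u v w, det2 w u x / det2 u v w, det2 u v x / det2 u v w])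
    (z := ![u, v, w]) (by simp [Fin.forall_fin_succ, hweight _ hu, hweight _ hv, hweight _ hw])
    (by simpa [Fin.sum_univ_three] using hsum)
    fun i _ => subset_convexHull ℝ _ (by fin_cases i <;> simp)
  simpa [Fin.sum_univ_three, ← hx] using hmem

lemma mem_interior_convexHull_quad {σ : ℝ} {p₀ p₁ p₂ p₃ x : Pt}
    (h₀₁₂ : 0 < σ * det2 p₀ p₁ p₂) (h₀₂₃ : 0 < σ * det2 p₀ p₂ p₃)
    (h₀₁ : 0 < σ * det2 p₀ p₁ x) (h₁₂ : 0 < σ * det2 p₁ p₂ x)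
    (h₂₃ : 0 < σ * det2 p₂ p₃ x) (h₃₀ : 0 < σ * det2 p₃ p₀ x) :
    x ∈ interior (convexHull ℝ ({p₀, p₁, p₂, p₃} : Set Pt)) := by
  set U : Set Pt := {y | 0 < σ * det2 p₀ p₁ y} ∩ {y | 0 < σ * det2 p₁ p₂ y} ∩
    {y | 0 < σ * det2 p₂ p₃ y} ∩ {y | 0 < σ * det2 p₃ p₀ y}
  have hU : IsOpen U := by
    refine ((IsOpen.inter ?_ ?_).inter ?_).inter ?_ <;>
      exact isOpen_lt continuous_const (continuous_const.mul (continuous_det2 _ _))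
  refine (hU.subset_interior_iff.mpr ?_) ⟨⟨⟨h₀₁, h₁₂⟩, h₂₃⟩, h₃₀⟩
  rintro y ⟨⟨⟨hy₀₁, hy₁₂⟩, hy₂₃⟩, hy₃₀⟩
  rcases le_or_gt 0 (σ * det2 p₀ p₂ y) with hdiag | hdiag
  · refine convexHull_mono ?_ (mem_convexHull_triangle_of_det2 h₀₂₃ hy₂₃.le hy₃₀.le hdiag)
    intro z; simp only [Set.mem_insert_iff, Set.mem_singleton_iff]; tauto
  · refine convexHull_mono ?_ (mem_convexHull_triangle_of_det2 h₀₁₂ hy₁₂.le ?_ hy₀₁.le)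
    · intro z; simp only [Set.mem_insert_iff, Set.mem_singleton_iff]; tauto
    · rw [det2_rotate, det2_swap, mul_neg]
      linarith

lemma det2_pos_of_mem_interior_polygon {n : ℕ} [NeZero n] {v : Fin n → Pt} {σ : ℝ}
    (hv : ∀ i j : Fin n, j ≠ i → j ≠ i + 1 → 0 < σ * det2 (v i) (v (i + 1)) (v j))
    {i j : Fin n} (hji : j ≠ i) (hji' : j ≠ i + 1) {x : Pt}
    (hx : x ∈ interior (convexHull ℝ (Set.range v))) : 0 < σ * det2 (v i) (v (i + 1)) x := by
  refine det2_pos_of_mem_interior_convexHull ?_ (hv i j hji hji') hx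
  rintro _ ⟨k, rfl⟩
  by_cases hki : k = i
  · simp [hki, det2_self_right]
  by_cases hki' : k = i + 1
  · simp [hki', det2_self_mid]
  exact (hv i k hki hki').le

def Oriented {n : ℕ} (σ : ℝ) (v : Fin n → Pt) : Prop :=
  ∀ i j k : Fin n, i < j → j < k → 0 < σ * det2 (v i) (v j) (v k)

/-- With five vertices every triple contains two cyclically consecutive ones, so the
edge conditions already orient all triples. -/
lemma oriented_iff_edges {σ : ℝ} (v : Fin 5 → Pt) :
    Oriented σ v ↔ ∀ i j : Fin 5, j ≠ i → j ≠ i + 1 → 0 < σ * det2 (v i) (v (i + 1)) (v j) := by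
  constructor
  · intro hv i j hji hji'
    rcases (by decide : ∀ i j : Fin 5, j ≠ i → j ≠ i + 1 →
        i + 1 < j ∧ i < i + 1 ∨ j < i ∧ i < i + 1 ∨ i + 1 < j ∧ j < i) i j hji hji' with
      h | h | h
    · exact hv _ _ _ h.2 h.1
    · rw [← det2_rotate]; exact hv _ _ _ h.1 h.2
    · rw [det2_rotate]; exact hv _ _ _ h.1 h.2
  · intro hv i j k hij hjk
    rcases (by decide : ∀ i j k : Fin 5, i < j → j < k →
        j = i + 1 ∨ k = j + 1 ∨ i = k + 1) i j k hij hjk with rfl | rfl | rfl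
    · exact hv _ _ (hij.trans hjk).ne' hjk.ne'
    · rw [det2_rotate]; exact hv _ _ hij.ne (hij.trans hjk).ne
    · rw [← det2_rotate]; exact hv _ _ hjk.ne hij.ne'

namespace Oriented

variable {n : ℕ} {σ : ℝ} {v : Fin n → Pt}

lemma det2_nonneg (h : Oriented σ v) {i j k : Fin n} (hij : i < j) (hk : k ≤ i ∨ j ≤ k) :
    0 ≤ σ * det2 (v i) (v j) (v k) := by
  rcases hk with hk | hk
  · rcases hk.lt_or_eq with hk | rfl
    · rw [← det2_rotate]; exact (h k i j hk hij).le
    · simp [det2_self_right]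
  · rcases hk.lt_or_eq with hk | rfl
    · exact (h i j k hij hk).le
    · simp [det2_self_mid]

lemma det2_nonpos (h : Oriented σ v) {i j k : Fin n} (hik : i ≤ k) (hkj : k ≤ j) :
    σ * det2 (v i) (v j) (v k) ≤ 0 := by
  rcases hik.lt_or_eq with hik | rfl
  · rcases hkj.lt_or_eq with hkj | rfl
    · rw [det2_swap, mul_neg, neg_nonpos]; exact (h i k j hik hkj).le
    · simp [det2_self_mid]
  · simp [det2_self_right]

end Oriented

lemma Oriented.replace_last {P : Set Pt} (hgp : GenPos P) {σ : ℝ} {p₀ p₁ p₂ p₃ p₄ p : Pt}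
    (h : Oriented σ ![p₀, p₁, p₂, p₃, p₄]) (h₀ : p₀ ∈ P) (h₁ : p₁ ∈ P) (h₂ : p₂ ∈ P)
    (h₃ : p₃ ∈ P) (hp : p ∈ P) (hpT : p ∈ convexHull ℝ ({p₀, p₃, p₄} : Set Pt))
    (hpos : 0 < σ * det2 p₀ p₃ p) : Oriented σ ![p₀, p₁, p₂, p₃, p] := by
  set v := ![p₀, p₁, p₂, p₃, p₄]
  have hσ : σ ≠ 0 := left_ne_zero_of_mul hpos.ne'
  have hvP : ∀ m, m ≠ Fin.last 4 → v m ∈ P := by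
    intro m hm; fin_cases m <;> simp_all [v]
  have hvp : ∀ m, m ≠ Fin.last 4 → v m ≠ p := by
    rintro m hm rfl
    have hm3 : m ≤ 3 := (by decide : ∀ m : Fin 5, m ≠ Fin.last 4 → m ≤ 3) m hm
    exact hpos.not_ge (h.det2_nonpos (i := 0) (j := 3) (Fin.zero_le m) hm3)
  have hnew : ∀ i j : Fin 5, i < j → j < Fin.last 4 → 0 < σ * det2 (v i) (v j) p := by
    intro i j hij hj
    have hnonneg : 0 ≤ σ * det2 (v i) (v j) p := by
      refine det2_nonneg_of_mem_convexHull ?_ hpT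
      rintro q (rfl | rfl | rfl)
      · exact h.det2_nonneg (k := 0) hij (Or.inl (Fin.zero_le i))
      · exact h.det2_nonneg (k := 3) hij
          (Or.inr ((by decide : ∀ j : Fin 5, j < Fin.last 4 → j ≤ 3) j hj))
      · exact h.det2_nonneg (k := Fin.last 4) hij (Or.inr hj.le)
    have hij' : v i ≠ v j := (ne_of_mul_det2_pos (h i j (Fin.last 4) hij hj)).1
    refine hnonneg.lt_of_ne' (mul_ne_zero hσ (hgp.det2_ne_zero (hvP i (hij.trans hj).ne)
      (hvP j hj.ne) hp hij' (hvp i (hij.trans hj).ne) (hvp j hj.ne)))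
  have hw : ∀ m, m ≠ Fin.last 4 → ![p₀, p₁, p₂, p₃, p] m = v m := by
    intro m hm; fin_cases m <;> first | rfl | exact absurd rfl hm
  intro i j k hij hjk
  rw [hw i (Fin.ne_last_of_lt (hij.trans hjk)), hw j (Fin.ne_last_of_lt hjk)]
  by_cases hk : k = Fin.last 4
  · subst hk; exact hnew i j hij hjk
  · rw [hw k hk]; exact h i j k hij hjk

lemma Oriented.mem_interior_quad_or_collinear_or_mem_triangle {σ : ℝ}
    {p₀ p₁ p₂ p₃ p₄ x : Pt} (h : Oriented σ ![p₀, p₁, p₂, p₃, p₄])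
    (hx : x ∈ interior (convexHull ℝ ({p₀, p₁, p₂, p₃, p₄} : Set Pt))) :
    x ∈ interior (convexHull ℝ ({p₀, p₁, p₂, p₃} : Set Pt)) ∨
      (Collinear ℝ ({p₀, p₃, x} : Set Pt) ∧ p₀ ≠ p₃ ∧ p₀ ≠ x ∧ p₃ ≠ x) ∨
      (x ∈ convexHull ℝ ({p₀, p₃, p₄} : Set Pt) ∧ 0 < σ * det2 p₀ p₃ x ∧
        σ * det2 p₀ p₃ x < σ * det2 p₀ p₃ p₄) := by
  have hedges := (oriented_iff_edges _).mp h
  have hrange : Set.range ![p₀, p₁, p₂, p₃, p₄] = {p₀, p₁, p₂, p₃, p₄} := by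
    simp only [Matrix.range_cons, Matrix.range_empty, Set.union_empty, Set.singleton_union]
  rw [← hrange] at hx
  have h₀₁ : 0 < σ * det2 p₀ p₁ x :=
    det2_pos_of_mem_interior_polygon hedges (i := 0) (j := 2) (by decide) (by decide) hx
  have h₁₂ : 0 < σ * det2 p₁ p₂ x :=
    det2_pos_of_mem_interior_polygon hedges (i := 1) (j := 3) (by decide) (by decide) hx
  have h₂₃ : 0 < σ * det2 p₂ p₃ x :=
    det2_pos_of_mem_interior_polygon hedges (i := 2) (j := 4) (by decide) (by decide) hx
  have h₃₄ : 0 < σ * det2 p₃ p₄ x :=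
    det2_pos_of_mem_interior_polygon hedges (i := 3) (j := 0) (by decide) (by decide) hx
  have h₄₀ : 0 < σ * det2 p₄ p₀ x :=
    det2_pos_of_mem_interior_polygon hedges (i := 4) (j := 1) (by decide) (by decide) hx
  have h₀₃₄ : 0 < σ * det2 p₀ p₃ p₄ := h 0 3 4 (by decide) (by decide)
  rcases lt_trichotomy (σ * det2 p₀ p₃ x) 0 with hneg | hzero | hpos
  · refine .inl (mem_interior_convexHull_quad (h 0 1 2 (by decide) (by decide))
      (h 0 2 3 (by decide) (by decide)) h₀₁ h₁₂ h₂₃ ?_)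
    rw [det2_rotate, det2_swap, mul_neg]
    linarith
  · have hσ : σ ≠ 0 := left_ne_zero_of_mul h₀₃₄.ne'
    exact .inr (.inl ⟨collinear_of_det2_eq_zero ((mul_eq_zero.mp hzero).resolve_left hσ),
      (ne_of_mul_det2_pos h₀₃₄).1, (ne_of_mul_det2_pos h₄₀).2.2, (ne_of_mul_det2_pos h₃₄).2.1⟩)
  · have hsum : σ * det2 p₀ p₃ x + σ * det2 p₃ p₄ x + σ * det2 p₄ p₀ x = σ * det2 p₀ p₃ p₄ := by
      rw [← mul_add, ← mul_add, det2_add_det2_add_det2]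
    exact .inr (.inr ⟨mem_convexHull_triangle_of_det2 h₀₃₄ h₃₄.le h₄₀.le hpos.le, hpos,
      by linarith⟩)

theorem stmt8_general (P : Set Pt) (hPfin : P.Finite) (hgp : GenPos P)
    (s a b c s' : Pt) (hs : s ∈ P) (ha : a ∈ P) (hb : b ∈ P) (hc : c ∈ P) (hs' : s' ∈ P)
    (hq1e : ∀ x ∈ P, x ∉ interior (convexHull ℝ ({s, a, b, c} : Set Pt)))
    (hpent : ConvexCyclicOrder ![s, a, b, c, s']) :
    ∃ s'' ∈ P, s'' ∈ convexHull ℝ ({s, c, s'} : Set Pt) ∧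
      ConvexCyclicOrder ![s, a, b, c, s''] ∧
      ∀ x ∈ P, x ∉ interior (convexHull ℝ ({s, a, b, c, s''} : Set Pt)) := by
  obtain ⟨σ, hσ, hedges⟩ := hpent
  have ho : Oriented σ ![s, a, b, c, s'] := (oriented_iff_edges _).mpr hedges
  set T := convexHull ℝ ({s, c, s'} : Set Pt)
  have hfin : {x | x ∈ P ∧ x ∈ T ∧ 0 < σ * det2 s c x}.Finite := hPfin.subset fun x hx => hx.1
  obtain ⟨s'', ⟨hs''P, hs''T, hs''pos⟩, hmin⟩ := Set.exists_min_image _ (fun x => σ * det2 s c x)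
    hfin ⟨s', hs', subset_convexHull ℝ _ (by simp), ho 0 3 4 (by decide) (by decide)⟩
  have ho'' := ho.replace_last hgp hs ha hb hc hs''P hs''T hs''pos
  refine ⟨s'', hs''P, hs''T, ⟨σ, hσ, (oriented_iff_edges _).mp ho''⟩, fun x hxP hx => ?_⟩
  rcases ho''.mem_interior_quad_or_collinear_or_mem_triangle hx with
    hquad | ⟨hcol, hsc, hsx, hcx⟩ | ⟨hxT, hxpos, hlt⟩
  · exact hq1e x hxP hquad
  · exact hgp s hs c hc x hxP hsc hsx hcx hcol
  · have hTT : convexHull ℝ ({s, c, s''} : Set Pt) ⊆ T := by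
      refine convexHull_min ?_ (convex_convexHull ℝ _)
      simp only [Set.insert_subset_iff, Set.singleton_subset_iff, hs''T, and_true]
      exact ⟨subset_convexHull ℝ _ (by simp), subset_convexHull ℝ _ (by simp)⟩
    exact (hmin x ⟨hxP, hTT hxT, hxpos⟩).not_gt hlt

/-- if `s, a, b, c` and `s', a, b, c` are empty convex
quadrilaterals of `P` and `s, a, b, c, s'` is a convex pentagon in that order,
then there is `s'' ∈ P` in the closed triangle `s c s'` such that
`s, a, b, c, s''` is a 5-hole of `P`. -/
theorem stmt8 (P : Set Pt) (hPfin : P.Finite) (hgp : GenPos P)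
    (s a b c s' : Pt) (hs : s ∈ P) (ha : a ∈ P) (hb : b ∈ P) (hc : c ∈ P) (hs' : s' ∈ P)
    (hq1 : ConvexCyclicOrder ![s, a, b, c])
    (hq1e : ∀ x ∈ P, x ∉ interior (convexHull ℝ ({s, a, b, c} : Set Pt)))
    (hq2 : ConvexCyclicOrder ![s', a, b, c])
    (hq2e : ∀ x ∈ P, x ∉ interior (convexHull ℝ ({s', a, b, c} : Set Pt)))
    (hpent : ConvexCyclicOrder ![s, a, b, c, s']) :
    ∃ s'' ∈ P, s'' ∈ convexHull ℝ ({s, c, s'} : Set Pt) ∧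
      ConvexCyclicOrder ![s, a, b, c, s''] ∧
      ∀ x ∈ P, x ∉ interior (convexHull ℝ ({s, a, b, c, s''} : Set Pt)) :=
  stmt8_general P hPfin hgp s a b c s' hs ha hb hc hs' hq1e hpent
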